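/- Assume (T6). Then for all f, g ∈ F and γ ∈ Γ, the γ-term of the product satisfies (fg)γ = Σ (fα)(gβ), where the sum ranges over the finitely many pairs (α, β) ∈ sp(f) × sp(g) with α + β = γ. -/

import Mathlib

/-!
The heart of the matter is `sp (u * w) ⊆ sp u + sp w`. Suppose `γ ∉ sp u + sp w` and let
`α + β` be the least element of `sp u + sp w` above `γ`. Splitting `u = u|_α + (u - u|_α)` and
`w = w|_β + (w - w|_β)`, the product of the truncations only involves sums below `γ`, so (T6)
keeps `γ` out of its support; the product of the tails has valuation `≥ α + β > γ`; each mixed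
product has a strictly smaller bound on the support of one factor, and since supports are well
ordered, a lexicographic induction on the pair of bounds terminates.

For the product formula, let `f'` be `f` minus its terms `fα` over the pairs `(α, β)` summing to
`γ`. Then `f g - ∑ fα gβ = f' g + ∑ fα (g - gβ)` and no pair from the supports of these products
sums to `γ`, while `∑ fα gβ` is supported in `{γ}`. An element supported in `{γ}` that agrees with
`f g` at `γ` is the `γ`-term of `f g`.
-/

open Pointwise

namespace Truncation

variable {F Γ : Type*} [DivisionRing F] [AddCommGroup Γ] [LinearOrder Γ] [IsOrderedAddMonoid Γ]

def sp (v : AddValuation F (WithTop Γ)) (tr : F → Γ → F) (f : F) : Set Γ :=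
  {γ | v (f - tr f γ) = γ}

/-- (T1), (T2), (T3), additivity from (T4), and (T5), for `tr f γ = f|_γ`. -/
structure IsTruncation (v : AddValuation F (WithTop Γ)) (tr : F → Γ → F) : Prop where
  le_val_sub_tr (f : F) (γ : Γ) : (γ : WithTop Γ) ≤ v (f - tr f γ)
  tr_eq_zero {f : F} {γ : Γ} : (γ : WithTop Γ) ≤ v f → tr f γ = 0
  tr_tr_of_lt (f : F) {α β : Γ} : α < β → tr (tr f α) β = tr f α
  tr_add (f g : F) (γ : Γ) : tr (f + g) γ = tr f γ + tr g γ
  isWF_sp (f : F) : (sp v tr f).IsWF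

/-- (T6). -/
def SpMulLT (v : AddValuation F (WithTop Γ)) (tr : F → Γ → F) : Prop :=
  ∀ (f g : F) (γ : Γ), (∀ α ∈ sp v tr f, ∀ β ∈ sp v tr g, α + β < γ) →
    ∀ δ ∈ sp v tr (f * g), δ < γ

/-- `term f γ` is the `γ`-term `fγ` of `f`. -/
structure IsTermMap (v : AddValuation F (WithTop Γ)) (tr : F → Γ → F) (term : F → Γ → F) :
    Prop where
  eq_zero {f : F} {γ : Γ} : γ ∉ sp v tr f → term f γ = 0
  exists_sp_eq_singleton {f : F} {γ : Γ} : γ ∈ sp v tr f → ∃ δ, sp v tr (term f γ) = {δ}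
  lt_val_sub {f : F} {γ : Γ} : γ ∈ sp v tr f → (γ : WithTop Γ) < v (f - tr f γ - term f γ)

variable {v : AddValuation F (WithTop Γ)} {tr : F → Γ → F}

namespace IsTruncation

variable (hT : IsTruncation v tr)
include hT

def trHom (γ : Γ) : F →+ F := AddMonoidHom.mk' (tr · γ) (hT.tr_add · · γ)

theorem tr_sub (f g : F) (γ : Γ) : tr (f - g) γ = tr f γ - tr g γ :=
  map_sub (hT.trHom γ) f g

theorem tr_neg (f : F) (γ : Γ) : tr (-f) γ = -tr f γ := map_neg (hT.trHom γ) f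

theorem tr_tr_of_le (f : F) {α β : Γ} (h : α ≤ β) : tr (tr f α) β = tr f α := by
  rcases h.lt_or_eq with h | rfl
  · exact hT.tr_tr_of_lt f h
  · have h0 : tr (f - tr f α) α = 0 := hT.tr_eq_zero (hT.le_val_sub_tr f α)
    rw [hT.tr_sub, sub_eq_zero] at h0
    exact h0.symm

theorem notMem_sp_iff {f : F} {γ : Γ} : γ ∉ sp v tr f ↔ (γ : WithTop Γ) < v (f - tr f γ) :=
  ((hT.le_val_sub_tr f γ).lt_iff_ne.trans ne_comm).symm

theorem notMem_sp_of_lt_val {f : F} {γ : Γ} (h : (γ : WithTop Γ) < v f) :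
    γ ∉ sp v tr f := by
  rwa [hT.notMem_sp_iff, hT.tr_eq_zero h.le, sub_zero]

theorem sp_zero : sp v tr (0 : F) = ∅ :=
  Set.eq_empty_of_forall_notMem fun γ => hT.notMem_sp_of_lt_val (by simp)

theorem eq_zero_of_sp_eq_empty {f : F} (h : sp v tr f = ∅) : f = 0 := by
  by_contra hf
  lift v f to Γ using (v.ne_top_iff.2 hf) with γ hγ
  have hγf : γ ∈ sp v tr f := by
    rw [sp, Set.mem_ofPred_eq, hT.tr_eq_zero hγ.le, sub_zero, hγ]
  simp [h] at hγf

theorem sp_add_subset (f g : F) : sp v tr (f + g) ⊆ sp v tr f ∪ sp v tr g := by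
  intro γ hγ
  by_contra h
  simp only [Set.mem_union, not_or, hT.notMem_sp_iff] at h
  have hsplit : f + g - tr (f + g) γ = (f - tr f γ) + (g - tr g γ) := by
    rw [hT.tr_add]; abel
  exact (hT.notMem_sp_iff.2 (hsplit ▸ v.map_lt_add h.1 h.2)) hγ

theorem sp_neg (f : F) : sp v tr (-f) = sp v tr f := by
  ext γ
  simp only [sp, Set.mem_ofPred_eq, hT.tr_neg, ← neg_add', ← sub_eq_add_neg, v.map_neg]

theorem sp_sub_subset (f g : F) : sp v tr (f - g) ⊆ sp v tr f ∪ sp v tr g := by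
  simpa [sub_eq_add_neg, hT.sp_neg] using hT.sp_add_subset f (-g)

theorem sp_sum_subset {ι : Type*} (s : Finset ι) (f : ι → F) :
    sp v tr (∑ i ∈ s, f i) ⊆ ⋃ i ∈ s, sp v tr (f i) := by
  classical
  induction s using Finset.induction_on with
  | empty => simp [hT.sp_zero]
  | insert a s ha ih =>
    rw [Finset.sum_insert ha, Finset.set_biUnion_insert]
    exact (hT.sp_add_subset _ _).trans (Set.union_subset_union_right _ ih)

theorem sp_tr_subset (f : F) (δ : Γ) : sp v tr (tr f δ) ⊆ sp v tr f ∩ Set.Iio δ := by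
  intro β hβ
  have hlt : β < δ := by
    by_contra! hle
    simp [sp, hT.tr_tr_of_le f hle] at hβ
  refine ⟨?_, hlt⟩
  have hβ' := hT.sp_sub_subset f (f - tr f δ) (by rwa [sub_sub_cancel])
  exact hβ'.resolve_right
    (hT.notMem_sp_of_lt_val ((WithTop.coe_lt_coe.2 hlt).trans_le (hT.le_val_sub_tr f δ)))

theorem sp_sub_tr_subset (f : F) (δ : Γ) : sp v tr (f - tr f δ) ⊆ sp v tr f ∩ Set.Ici δ := by
  intro β hβ
  refine ⟨(hT.sp_sub_subset _ _ hβ).elim id fun h => (hT.sp_tr_subset f δ h).1, ?_⟩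
  rw [Set.mem_Ici]
  by_contra! hlt
  exact hT.notMem_sp_of_lt_val ((WithTop.coe_lt_coe.2 hlt).trans_le (hT.le_val_sub_tr f δ)) hβ

theorem notMem_sp_add {f g : F} {γ : Γ} (hf : γ ∉ sp v tr f) (hg : γ ∉ sp v tr g) :
    γ ∉ sp v tr (f + g) :=
  fun h => (hT.sp_add_subset f g h).elim hf hg

variable (h6 : SpMulLT v tr)
include h6

theorem exists_lt_add_notMem_sp_mul_tr {u w : F} {γ : Γ} (hγ : γ ∉ sp v tr u + sp v tr w)
    (h : ∃ α ∈ sp v tr u, ∃ β ∈ sp v tr w, γ < α + β) :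
    ∃ α ∈ sp v tr u, ∃ β ∈ sp v tr w, γ < α + β ∧ γ ∉ sp v tr (tr u α * tr w β) := by
  set D := (sp v tr u + sp v tr w) ∩ Set.Ioi γ
  have hD : D.IsWF := ((hT.isWF_sp u).add (hT.isWF_sp w)).mono Set.inter_subset_left
  have hDne : D.Nonempty := by
    obtain ⟨α, hα, β, hβ, hlt⟩ := h
    exact ⟨α + β, Set.add_mem_add hα hβ, hlt⟩
  obtain ⟨hmin, hlt⟩ := hD.min_mem hDne
  obtain ⟨α, hα, β, hβ, hsum⟩ := Set.mem_add.1 hmin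
  refine ⟨α, hα, β, hβ, hsum ▸ hlt, fun hmem => lt_irrefl γ (h6 _ _ γ ?_ γ hmem)⟩
  intro α' hα' β' hβ'
  obtain ⟨hα'u, hα'lt⟩ := hT.sp_tr_subset u α hα'
  obtain ⟨hβ'w, hβ'lt⟩ := hT.sp_tr_subset w β hβ'
  have hmem : α' + β' ∈ sp v tr u + sp v tr w := Set.add_mem_add hα'u hβ'w
  have hnotD : α' + β' ∉ D := fun hD' =>
    hD.not_lt_min hDne hD' (hsum ▸ add_lt_add hα'lt hβ'lt)
  exact (not_lt.1 fun h => hnotD ⟨hmem, h⟩).lt_of_ne fun h => hγ (h ▸ hmem)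

theorem notMem_sp_mul_of_bounded (γ : Γ) {S T : Set Γ} (hS_wf : S.IsWF) (hT_wf : T.IsWF)
    {a b : WithTop Γ} (ha : a ∈ insert ⊤ (WithTop.some '' S))
    (hb : b ∈ insert ⊤ (WithTop.some '' T)) (u w : F) (hu : sp v tr u ⊆ S)
    (hw : sp v tr w ⊆ T) (hua : ∀ α ∈ sp v tr u, (α : WithTop Γ) < a)
    (hwb : ∀ β ∈ sp v tr w, (β : WithTop Γ) < b) (hγ : γ ∉ sp v tr u + sp v tr w) :
    γ ∉ sp v tr (u * w) := by
  have hwf {R : Set Γ} (hR : R.IsWF) : (insert ⊤ (WithTop.some '' R)).IsWF :=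
    ((hR.isPWO.image_of_monotone WithTop.coe_mono).insert ⊤).isWF
  revert b u w
  apply (hwf hS_wf).induction ha
  intro a ha IHa b hb
  apply (hwf hT_wf).induction hb
  intro b hb IHb u w hu hw hua hwb hγ
  by_cases hhigh : ∃ α ∈ sp v tr u, ∃ β ∈ sp v tr w, γ < α + β
  swap
  · push Not at hhigh
    refine fun hmem => lt_irrefl γ (h6 u w γ (fun α hα β hβ => ?_) γ hmem)
    exact (hhigh α hα β hβ).lt_of_ne fun h => hγ (h ▸ Set.add_mem_add hα hβ)
  obtain ⟨α, hα, β, hβ, hlt, hlow⟩ := hT.exists_lt_add_notMem_sp_mul_tr h6 hγ hhigh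
  have hdecomp : u * w = tr u α * tr w β + (tr u α * (w - tr w β) +
      ((u - tr u α) * tr w β + (u - tr u α) * (w - tr w β))) := by
    noncomm_ring
  have hu₀ : sp v tr (tr u α) ⊆ sp v tr u := (hT.sp_tr_subset u α).trans Set.inter_subset_left
  have hw₀ : sp v tr (tr w β) ⊆ sp v tr w := (hT.sp_tr_subset w β).trans Set.inter_subset_left
  have hu₁ : sp v tr (u - tr u α) ⊆ sp v tr u :=
    (hT.sp_sub_tr_subset u α).trans Set.inter_subset_left
  have hw₁ : sp v tr (w - tr w β) ⊆ sp v tr w :=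
    (hT.sp_sub_tr_subset w β).trans Set.inter_subset_left
  rw [hdecomp]
  refine hT.notMem_sp_add hlow (hT.notMem_sp_add ?_ (hT.notMem_sp_add ?_ ?_))
  · exact IHa α (Or.inr ⟨α, hu hα, rfl⟩) (hua α hα) hb _ _ (hu₀.trans hu) (hw₁.trans hw)
      (fun x hx => WithTop.coe_lt_coe.2 (hT.sp_tr_subset u α hx).2) (fun x hx => hwb x (hw₁ hx))
      fun h => hγ (Set.add_subset_add hu₀ hw₁ h)
  · exact IHb β (Or.inr ⟨β, hw hβ, rfl⟩) (hwb β hβ) _ _ (hu₁.trans hu) (hw₀.trans hw)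
      (fun x hx => hua x (hu₁ hx)) (fun x hx => WithTop.coe_lt_coe.2 (hT.sp_tr_subset w β hx).2)
      fun h => hγ (Set.add_subset_add hu₁ hw₀ h)
  · refine hT.notMem_sp_of_lt_val ((WithTop.coe_lt_coe.2 hlt).trans_le ?_)
    rw [v.map_mul, WithTop.coe_add]
    exact add_le_add (hT.le_val_sub_tr u α) (hT.le_val_sub_tr w β)

theorem sp_mul_subset (u w : F) : sp v tr (u * w) ⊆ sp v tr u + sp v tr w := by
  intro γ hγ
  by_contra h
  exact hT.notMem_sp_mul_of_bounded h6 γ (hT.isWF_sp u) (hT.isWF_sp w) (Set.mem_insert ⊤ _)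
    (Set.mem_insert ⊤ _) u w subset_rfl subset_rfl (fun α _ => WithTop.coe_lt_top α)
    (fun β _ => WithTop.coe_lt_top β) h hγ

end IsTruncation

namespace IsTermMap

variable {term : F → Γ → F} (hτ : IsTermMap v tr term)
include hτ

theorem val_term {f : F} {γ : Γ} (h : γ ∈ sp v tr f) : v (term f γ) = γ := by
  have hsplit : term f γ = (f - tr f γ) - (f - tr f γ - term f γ) := by abel
  rw [hsplit, v.map_sub_eq_of_lt_left (h.symm ▸ hτ.lt_val_sub h)]
  exact h

variable (hT : IsTruncation v tr)
include hT

theorem sp_term_subset (f : F) (γ : Γ) : sp v tr (term f γ) ⊆ {γ} := by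
  by_cases h : γ ∈ sp v tr f
  · obtain ⟨δ, hδ⟩ := hτ.exists_sp_eq_singleton h
    have hγ : γ ∈ sp v tr (term f γ) := by
      rw [sp, Set.mem_ofPred_eq, hT.tr_eq_zero (hτ.val_term h).ge, sub_zero, hτ.val_term h]
    rw [hδ] at hγ ⊢
    rw [Set.mem_singleton_iff.1 hγ]
  · simp [hτ.eq_zero h, hT.sp_zero]

theorem notMem_sp_sub_term (f : F) (γ : Γ) : γ ∉ sp v tr (f - term f γ) := by
  by_cases h : γ ∈ sp v tr f
  · rw [hT.notMem_sp_iff, hT.tr_sub, hT.tr_eq_zero (hτ.val_term h).ge, sub_zero,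
      sub_right_comm]
    exact hτ.lt_val_sub h
  · rwa [hτ.eq_zero h, sub_zero]

theorem sp_sub_sum_term_subset (f : F) (A : Finset Γ) :
    sp v tr (f - ∑ α ∈ A, term f α) ⊆ sp v tr f \ A := by
  classical
  intro γ hγ
  have hγA : γ ∉ A := by
    intro hA
    rw [← Finset.add_sum_erase A _ hA, ← sub_sub] at hγ
    rcases hT.sp_sub_subset _ _ hγ with h | h
    · exact hτ.notMem_sp_sub_term hT f γ h
    · obtain ⟨α, hα, hγα⟩ := Set.mem_iUnion₂.1 (hT.sp_sum_subset _ _ h)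
      exact Finset.ne_of_mem_erase hα (hτ.sp_term_subset hT f α hγα).symm
  refine ⟨(hT.sp_sub_subset _ _ hγ).resolve_right fun h => hγA ?_, hγA⟩
  obtain ⟨α, hα, hγα⟩ := Set.mem_iUnion₂.1 (hT.sp_sum_subset _ _ h)
  exact (hτ.sp_term_subset hT f α hγα) ▸ hα

theorem term_eq_of_sp_subset {f y : F} {γ : Γ} (hy : sp v tr y ⊆ {γ})
    (hfy : γ ∉ sp v tr (f - y)) : term f γ = y := by
  rw [← sub_eq_zero]
  refine hT.eq_zero_of_sp_eq_empty (Set.eq_empty_of_forall_notMem fun δ hδ => ?_)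
  have hδγ : δ = γ := by
    rcases hT.sp_sub_subset _ _ hδ with h | h
    exacts [hτ.sp_term_subset hT f γ h, hy h]
  subst hδγ
  rw [← sub_sub_sub_cancel_left _ _ f] at hδ
  exact (hT.sp_sub_subset _ _ hδ).elim hfy (hτ.notMem_sp_sub_term hT f δ)

variable (h6 : SpMulLT v tr)
include h6

theorem notMem_sp_mul_sub_sum (f g : F) (γ : Γ) :
    γ ∉ sp v tr (f * g - ∑ p ∈ Finset.antidiagonal (hT.isWF_sp f).isPWO (hT.isWF_sp g).isPWO γ,
      term f p.1 * term g p.2) := by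
  classical
  set s := Finset.antidiagonal (hT.isWF_sp f).isPWO (hT.isWF_sp g).isPWO γ
  have hfst : ∑ p ∈ s, term f p.1 = ∑ α ∈ s.image Prod.fst, term f α := by
    refine (Finset.sum_image fun p hp q hq h => Prod.ext h ?_).symm
    have hp' := (Finset.mem_antidiagonal.1 hp).2.2
    have hq' := (Finset.mem_antidiagonal.1 hq).2.2
    exact add_left_cancel (hp'.trans (h ▸ hq'.symm))
  have hdecomp : f * g - ∑ p ∈ s, term f p.1 * term g p.2 =
      (f - ∑ p ∈ s, term f p.1) * g + ∑ p ∈ s, term f p.1 * (g - term g p.2) := by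
    simp only [sub_mul, mul_sub, Finset.sum_mul, Finset.sum_sub_distrib]
    abel
  rw [hdecomp]
  refine hT.notMem_sp_add ?_ ?_
  · intro h
    obtain ⟨α, hα, β, hβ, hsum⟩ := hT.sp_mul_subset h6 _ _ h
    rw [hfst] at hα
    obtain ⟨hαf, hαs⟩ := hτ.sp_sub_sum_term_subset hT f _ hα
    exact hαs (Finset.mem_image.2 ⟨(α, β), Finset.mem_antidiagonal.2 ⟨hαf, hβ, hsum⟩, rfl⟩)
  · intro h
    obtain ⟨p, hp, hγp⟩ := Set.mem_iUnion₂.1 (hT.sp_sum_subset _ _ h)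
    obtain ⟨α, hα, β, hβ, hsum⟩ := hT.sp_mul_subset h6 _ _ hγp
    have hβ' : β ∈ sp v tr g \ {p.2} := by
      simpa using hτ.sp_sub_sum_term_subset hT g {p.2} (by simpa using hβ)
    rw [hτ.sp_term_subset hT f p.1 hα] at hsum
    exact hβ'.2 (add_left_cancel (hsum.trans (Finset.mem_antidiagonal.1 hp).2.2.symm))

theorem sp_sum_term_mul_term_subset (f g : F) (γ : Γ) :
    sp v tr (∑ p ∈ Finset.antidiagonal (hT.isWF_sp f).isPWO (hT.isWF_sp g).isPWO γ,
      term f p.1 * term g p.2) ⊆ {γ} := by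
  intro δ hδ
  obtain ⟨p, hp, hδp⟩ := Set.mem_iUnion₂.1 (hT.sp_sum_subset _ _ hδ)
  have hδ' := Set.add_subset_add (hτ.sp_term_subset hT f p.1) (hτ.sp_term_subset hT g p.2)
    (hT.sp_mul_subset h6 _ _ hδp)
  rwa [Set.singleton_add_singleton, (Finset.mem_antidiagonal.1 hp).2.2] at hδ'

theorem term_mul (f g : F) (γ : Γ) :
    term (f * g) γ = ∑ p ∈ Finset.antidiagonal (hT.isWF_sp f).isPWO (hT.isWF_sp g).isPWO γ,
      term f p.1 * term g p.2 :=
  hτ.term_eq_of_sp_subset hT (hτ.sp_sum_term_mul_term_subset hT h6 f g γ)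
    (hτ.notMem_sp_mul_sub_sum hT h6 f g γ)

end IsTermMap

end Truncation

open Truncation in
theorem stmt_19_general
    (F : Type*) [Field F] (Γ : Type*) [AddCommGroup Γ] [LinearOrder Γ] [IsOrderedAddMonoid Γ]
    (v : F → WithTop Γ)
    (hv0 : ∀ f : F, v f = ⊤ ↔ f = 0)
    (hvm : ∀ f g : F, v (f * g) = v f + v g)
    (hva : ∀ f g : F, min (v f) (v g) ≤ v (f + g))
    (tr : F → Γ → F)
    (T1 : ∀ (f : F) (α : Γ), (α : WithTop Γ) ≤ v (f - tr f α))
    (T2 : ∀ (f : F) (α : Γ), (α : WithTop Γ) ≤ v f → tr f α = 0)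
    (T3 : ∀ (f : F) (α β : Γ), α < β → tr (tr f α) β = tr f α)
    (T4a : ∀ (f g : F) (α : Γ), tr (f + g) α = tr f α + tr g α)
    (T5 : ∀ f : F, {γ : Γ | v (f - tr f γ) = (γ : WithTop Γ)}.IsWF)
    (T6 : ∀ (f g : F) (γ : Γ),
      (∀ α ∈ {γ' : Γ | v (f - tr f γ') = (γ' : WithTop Γ)},
        ∀ β ∈ {γ' : Γ | v (g - tr g γ') = (γ' : WithTop Γ)}, α + β < γ) →
      ∀ δ ∈ {γ' : Γ | v (f * g - tr (f * g) γ') = (γ' : WithTop Γ)}, δ < γ)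
    (term : F → Γ → F)
    (hterm0 : ∀ (f : F) (γ : Γ), γ ∉ {γ' : Γ | v (f - tr f γ') = (γ' : WithTop Γ)} → term f γ = 0)
    (hterm1 : ∀ (f : F) (γ : Γ), γ ∈ {γ' : Γ | v (f - tr f γ') = (γ' : WithTop Γ)} →
      (∃ δ : Γ, {γ' : Γ | v (term f γ - tr (term f γ) γ') = (γ' : WithTop Γ)} = {δ}) ∧
      (γ : WithTop Γ) < v (f - tr f γ - term f γ))
    (f g : F) (γ : Γ) :
    ∃ s : Finset (Γ × Γ),
      (∀ p : Γ × Γ, p ∈ s ↔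
        p.1 ∈ {γ' : Γ | v (f - tr f γ') = (γ' : WithTop Γ)} ∧
        p.2 ∈ {γ' : Γ | v (g - tr g γ') = (γ' : WithTop Γ)} ∧ p.1 + p.2 = γ) ∧
      term (f * g) γ = ∑ p ∈ s, term f p.1 * term g p.2 := by
  have hv1 : v 1 = 0 := by
    lift v 1 to Γ using (hv0 1).not.2 one_ne_zero with x hx
    have h := hvm 1 1
    rw [mul_one, ← hx] at h
    norm_cast at h ⊢
    simpa using h
  let V : AddValuation F (WithTop Γ) := .of v ((hv0 0).2 rfl) hv1 hva hvm
  have hT : IsTruncation V tr := ⟨T1, T2 _ _, T3, T4a, T5⟩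
  have hτ : IsTermMap V tr term := ⟨hterm0 _ _, (hterm1 _ _ · |>.1), (hterm1 _ _ · |>.2)⟩
  exact ⟨_, fun _ => Finset.mem_antidiagonal, hτ.term_mul hT T6 f g γ⟩

theorem stmt_19
    (F : Type*) [Field F] (Γ : Type*) [AddCommGroup Γ] [LinearOrder Γ] [IsOrderedAddMonoid Γ]
    (v : F → WithTop Γ)
    (hv0 : ∀ f : F, v f = ⊤ ↔ f = 0)
    (hvm : ∀ f g : F, v (f * g) = v f + v g)
    (hva : ∀ f g : F, min (v f) (v g) ≤ v (f + g))
    (C : Subfield F)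
    (hC1 : ∀ c ∈ C, c ≠ 0 → v c = 0)
    (hC2 : ∀ f : F, v f = 0 → ∃ c ∈ C, 0 < v (f - c))
    (tr : F → Γ → F)
    (T1 : ∀ (f : F) (α : Γ), (α : WithTop Γ) ≤ v (f - tr f α))
    (T2 : ∀ (f : F) (α : Γ), (α : WithTop Γ) ≤ v f → tr f α = 0)
    (T3 : ∀ (f : F) (α β : Γ), α < β → tr (tr f α) β = tr f α)
    (T4a : ∀ (f g : F) (α : Γ), tr (f + g) α = tr f α + tr g α)
    (T4s : ∀ c ∈ C, ∀ (f : F) (α : Γ), tr (c * f) α = c * tr f α)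
    (T5 : ∀ f : F, {γ : Γ | v (f - tr f γ) = (γ : WithTop Γ)}.IsWF)
    (T6 : ∀ (f g : F) (γ : Γ),
      (∀ α ∈ {γ' : Γ | v (f - tr f γ') = (γ' : WithTop Γ)},
        ∀ β ∈ {γ' : Γ | v (g - tr g γ') = (γ' : WithTop Γ)}, α + β < γ) →
      ∀ δ ∈ {γ' : Γ | v (f * g - tr (f * g) γ') = (γ' : WithTop Γ)}, δ < γ)
    (term : F → Γ → F)
    (hterm0 : ∀ (f : F) (γ : Γ), γ ∉ {γ' : Γ | v (f - tr f γ') = (γ' : WithTop Γ)} → term f γ = 0)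
    (hterm1 : ∀ (f : F) (γ : Γ), γ ∈ {γ' : Γ | v (f - tr f γ') = (γ' : WithTop Γ)} →
      (∃ δ : Γ, {γ' : Γ | v (term f γ - tr (term f γ) γ') = (γ' : WithTop Γ)} = {δ}) ∧
      (γ : WithTop Γ) < v (f - tr f γ - term f γ))
    (f g : F) (γ : Γ) :
    ∃ s : Finset (Γ × Γ),
      (∀ p : Γ × Γ, p ∈ s ↔
        p.1 ∈ {γ' : Γ | v (f - tr f γ') = (γ' : WithTop Γ)} ∧
        p.2 ∈ {γ' : Γ | v (g - tr g γ') = (γ' : WithTop Γ)} ∧ p.1 + p.2 = γ) ∧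
      term (f * g) γ = ∑ p ∈ s, term f p.1 * term g p.2 :=
  stmt_19_general F Γ v hv0 hvm hva tr T1 T2 T3 T4a T5 T6 term hterm0 hterm1 f g γ
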